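/- Let p, H be real with 0 < p ≤ 1 ≤ H and set a := √(1/p² − 1). With D(η) := 1/H² − 1/p² + (1/H² − 1/p² + 2(1 − 1/H²))·cosh²η and Y₁(η) := exp( −(a/2) · arctan( a · 2·cosh η·√(Q(η)) / D(η) ) ), define r(η) := ( sinh η / R₁(η) ) · Y₁(η). Then for every real η with sinh η > 0, Q(η) > 0 and D(η) ≠ 0, r is differentiable at η and satisfies r′(η) = r(η) / ( p² · R₁(η) · sinh η ). -/

import Mathlib

/-!
Write `r = (sinh / R₁) · Y₁` and `W = √Q`. Since `W² = 1 - 1/p² + (1 - 1/H²) sinh²`, the quotient rule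
collapses to `(sinh / R₁)' = (1 - a² cosh / W) / R₁²`. The arctangent argument `N / D` of `Y₁`, with
`N = 2a cosh W`, satisfies `D² + N² = (1/p² - 1/H²)² sinh⁴`, and this makes its arctangent have
derivative `-2a / (W sinh)`; hence `Y₁' / Y₁ = a² / (W sinh)`. Adding the two logarithmic derivatives,
`r' / r = (1 - a² cosh / W + a² R₁ / W) / (sinh R₁) = (1 + a²) / (sinh R₁) = 1 / (p² R₁ sinh)`.
-/

/-- `a p = √(1/p² - 1)`. -/
noncomputable def aa (p : ℝ) : ℝ := Real.sqrt (1 / p ^ 2 - 1)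

/-- `Q p H η = 1 - 1/p² + (1 - 1/H²)·sinh²η`. -/
noncomputable def Q (p H η : ℝ) : ℝ :=
  1 - 1 / p ^ 2 + (1 - 1 / H ^ 2) * Real.sinh η ^ 2

/-- `R₁ η = cosh η + √(Q η)`. -/
noncomputable def R1 (p H η : ℝ) : ℝ :=
  Real.cosh η + Real.sqrt (Q p H η)

/-- `D p H η = 1/H² - 1/p² + (1/H² - 1/p² + 2(1 - 1/H²))·cosh²η`. -/
noncomputable def D (p H η : ℝ) : ℝ :=
  1 / H ^ 2 - 1 / p ^ 2 + (1 / H ^ 2 - 1 / p ^ 2 + 2 * (1 - 1 / H ^ 2)) * Real.cosh η ^ 2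

/-- `Y₁(η) := exp(-(a/2)·arctan(a·2·cosh η·√(Q η)/D η))`. -/
noncomputable def Y1 (p H η : ℝ) : ℝ :=
  Real.exp (-(aa p / 2) *
    Real.arctan (aa p * (2 * Real.cosh η * Real.sqrt (Q p H η)) / D p H η))

/-- `r(η) := (sinh η / R₁ η)·Y₁(η)`. -/
noncomputable def rr (p H η : ℝ) : ℝ :=
  Real.sinh η / R1 p H η * Y1 p H η

open Real

theorem HasDerivAt.arctan_div {f g : ℝ → ℝ} {f' g' x : ℝ} (hf : HasDerivAt f f' x)
    (hg : HasDerivAt g g' x) (hgx : g x ≠ 0) :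
    HasDerivAt (fun t => Real.arctan (f t / g t))
      ((f' * g x - f x * g') / (g x ^ 2 + f x ^ 2)) x := by
  refine (hf.div hg hgx).arctan.congr_deriv ?_
  simp only [Pi.div_apply]
  field_simp

theorem aa_sq {p : ℝ} (hp : 0 < p) (hp1 : p ≤ 1) : aa p ^ 2 = 1 / p ^ 2 - 1 := by
  refine sq_sqrt (sub_nonneg.2 ?_)
  rw [le_div_iff₀ (by positivity)]
  nlinarith

section

variable (p H η : ℝ)

theorem sinh_ne_zero_of_Q_pos (hp : 0 < p) (hp1 : p ≤ 1) (hQ : 0 < Q p H η) : sinh η ≠ 0 := by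
  intro hs
  have : 1 ≤ 1 / p ^ 2 := by rw [le_div_iff₀ (by positivity)]; nlinarith
  simp only [Q, hs] at hQ
  linarith

theorem R1_pos : 0 < R1 p H η :=
  add_pos_of_pos_of_nonneg (cosh_pos η) (sqrt_nonneg _)

theorem hasDerivAt_Q :
    HasDerivAt (Q p H) ((1 - 1 / H ^ 2) * (2 * sinh η * cosh η)) η := by
  have h := (((hasDerivAt_sinh η).pow 2).const_mul (1 - 1 / H ^ 2)).const_add (1 - 1 / p ^ 2)
  exact h.congr_deriv (by norm_num)

theorem hasDerivAt_D :
    HasDerivAt (D p H)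
      ((1 / H ^ 2 - 1 / p ^ 2 + 2 * (1 - 1 / H ^ 2)) * (2 * cosh η * sinh η)) η := by
  have h := (((hasDerivAt_cosh η).pow 2).const_mul
    (1 / H ^ 2 - 1 / p ^ 2 + 2 * (1 - 1 / H ^ 2))).const_add (1 / H ^ 2 - 1 / p ^ 2)
  exact h.congr_deriv (by norm_num)

variable {p H η}

theorem sq_sqrt_Q (hQ : 0 ≤ Q p H η) :
    √(Q p H η) ^ 2 = 1 - 1 / p ^ 2 + (1 - 1 / H ^ 2) * sinh η ^ 2 :=
  sq_sqrt hQ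

theorem hasDerivAt_sqrt_Q (hQ : 0 < Q p H η) :
    HasDerivAt (fun t => √(Q p H t))
      ((1 - 1 / H ^ 2) * sinh η * cosh η / √(Q p H η)) η := by
  refine ((hasDerivAt_Q p H η).sqrt hQ.ne').congr_deriv ?_
  field_simp

theorem hasDerivAt_sinh_div_R1 (hQ : 0 < Q p H η) :
    HasDerivAt (fun t => sinh t / R1 p H t)
      ((1 - (1 / p ^ 2 - 1) * cosh η / √(Q p H η)) / R1 p H η ^ 2) η := by
  have hR1 := (hasDerivAt_cosh η).add (hasDerivAt_sqrt_Q hQ)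
  refine ((hasDerivAt_sinh η).div hR1 (R1_pos p H η).ne').congr_deriv ?_
  have hW0 : √(Q p H η) ≠ 0 := (sqrt_pos.2 hQ).ne'
  simp only [R1, Pi.add_apply]
  field_simp
  linear_combination cosh η * sq_sqrt_Q hQ.le + √(Q p H η) * cosh_sq' η

theorem D_sq_add_cosh_sq_mul_Q :
    D p H η ^ 2 + 4 * (1 / p ^ 2 - 1) * cosh η ^ 2 * Q p H η
      = (1 / p ^ 2 - 1 / H ^ 2) ^ 2 * sinh η ^ 4 := by
  rw [D, Q, cosh_sq']
  ring

theorem hasDerivAt_arctan_Y1_arg (hp : 0 < p) (hp1 : p ≤ 1) (hQ : 0 < Q p H η)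
    (hD : D p H η ≠ 0) :
    HasDerivAt (fun t => arctan (aa p * (2 * cosh t * √(Q p H t)) / D p H t))
      (-(2 * aa p / (√(Q p H η) * sinh η))) η := by
  have hN := (((hasDerivAt_cosh η).const_mul 2).mul (hasDerivAt_sqrt_Q hQ)).const_mul (aa p)
  refine (hN.arctan_div (hasDerivAt_D p H η) hD).congr_deriv ?_
  have hsum : D p H η ^ 2 + (aa p * (2 * cosh η * √(Q p H η))) ^ 2
      = (1 / p ^ 2 - 1 / H ^ 2) ^ 2 * sinh η ^ 4 := by
    rw [← D_sq_add_cosh_sq_mul_Q, mul_pow, mul_pow, mul_pow, sq_sqrt hQ.le, aa_sq hp hp1]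
    ring
  have hW0 : √(Q p H η) ≠ 0 := (sqrt_pos.2 hQ).ne'
  have hS := sinh_ne_zero_of_Q_pos p H η hp hp1 hQ
  simp only [Pi.mul_apply]
  rw [div_eq_iff (by positivity), hsum]
  have hW := sq_sqrt_Q hQ.le
  unfold D at *
  -- kept as atoms, otherwise `field_simp` multiplies through by `p ^ 2` and `H ^ 2`
  set P := 1 / p ^ 2
  set J := 1 / H ^ 2
  field_simp
  linear_combination
    aa p * (J - P - (J - P + 2 * (1 - J)) * cosh η ^ 2) * hW
    - aa p * ((J - P) ^ 2 + (1 - J) * (J - P - (J - P + 2 * (1 - J)) * cosh η ^ 2)) * cosh_sq' η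

theorem hasDerivAt_Y1 (hp : 0 < p) (hp1 : p ≤ 1) (hQ : 0 < Q p H η) (hD : D p H η ≠ 0) :
    HasDerivAt (Y1 p H) (Y1 p H η * ((1 / p ^ 2 - 1) / (√(Q p H η) * sinh η))) η := by
  refine ((hasDerivAt_arctan_Y1_arg hp hp1 hQ hD).const_mul (-(aa p / 2))).exp.congr_deriv ?_
  rw [← aa_sq hp hp1, Y1]
  ring

end

theorem stmt4_general (p H : ℝ) (hp : 0 < p) (hp1 : p ≤ 1) (η : ℝ)
    (hQ : 0 < Q p H η) (hD : D p H η ≠ 0) :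
    HasDerivAt (fun t : ℝ => rr p H t)
      (rr p H η / (p ^ 2 * R1 p H η * Real.sinh η)) η := by
  refine ((hasDerivAt_sinh_div_R1 hQ).mul (hasDerivAt_Y1 hp hp1 hQ hD)).congr_deriv ?_
  have hS := sinh_ne_zero_of_Q_pos p H η hp hp1 hQ
  have hW : √(Q p H η) ≠ 0 := (sqrt_pos.2 hQ).ne'
  have hR := (R1_pos p H η).ne'
  unfold rr
  field_simp
  rw [R1]
  ring

/-- For every `η` with `sinh η > 0`, `Q η > 0`, `D η ≠ 0`, the function `r`
is differentiable at `η` and satisfies `r′(η) = r(η)/(p²·R₁(η)·sinh η)`. -/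
theorem stmt4 (p H : ℝ) (hp : 0 < p) (hp1 : p ≤ 1) (hH : 1 ≤ H) (η : ℝ)
    (hs : 0 < Real.sinh η) (hQ : 0 < Q p H η) (hD : D p H η ≠ 0) :
    HasDerivAt (fun t : ℝ => rr p H t)
      (rr p H η / (p ^ 2 * R1 p H η * Real.sinh η)) η :=
  stmt4_general p H hp hp1 η hQ hD
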